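/- In the variable flow matrix M'_{G,I,O} over F₂, if a {0,1}-valuation σ has σ(x_v) = 0 and σ(y_v) = 1 for some internal vertex v, then row v of the evaluated matrix is identically zero and hence the matrix is not right-invertible; and if σ(x_v) = 1, σ(y_v) = 0, then changing σ(y_v) to 1 cannot decrease the row rank of the evaluated matrix. Consequently, if M'_{G,I,O} is right-invertible under some {0,1}-valuation, it is right-invertible under a {0,1}-valuation σ' satisfying σ'(x_v) = σ'(y_v) for all internal vertices v. -/
import Mathlib


inductive MLabel | X | Y | Z | XY | XZ | YZ
deriving DecidableEq

open Finset

variable {V : Type} [Fintype V] [DecidableEq V]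

/-- The odd neighbourhood of a set of vertices. -/
def Odds (G : SimpleGraph V) [DecidableRel G.Adj] (A : Finset V) : Finset V :=
  Finset.univ.filter fun v => Odd (A ∩ G.neighborFinset v).card

/-- Pauli flow conditions (P1)-(P9) for a labelled open graph. -/
structure PauliFlow (G : SimpleGraph V) [DecidableRel G.Adj]
    (I O : Finset V) (lam : V → MLabel) (c : V → Finset V) (prec : V → V → Prop) : Prop where
  irrefl : ∀ u, ¬ prec u u
  trans : ∀ u v w, prec u v → prec v w → prec u w
  csub : ∀ u, u ∉ O → ∀ v ∈ c u, v ∉ I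
  P1 : ∀ u, u ∉ O → ∀ v ∈ c u, v ∉ O → u ≠ v →
      lam v ≠ MLabel.X → lam v ≠ MLabel.Y → prec u v
  P2 : ∀ u, u ∉ O → ∀ v ∈ Odds G (c u), v ∉ O → u ≠ v →
      lam v ≠ MLabel.Y → lam v ≠ MLabel.Z → prec u v
  P3 : ∀ u, u ∉ O → ∀ v, v ∉ O → ¬ prec u v → u ≠ v → lam v = MLabel.Y →
      (v ∈ c u ↔ v ∈ Odds G (c u))
  P4 : ∀ u, u ∉ O → lam u = MLabel.XY → u ∉ c u ∧ u ∈ Odds G (c u)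
  P5 : ∀ u, u ∉ O → lam u = MLabel.XZ → u ∈ c u ∧ u ∈ Odds G (c u)
  P6 : ∀ u, u ∉ O → lam u = MLabel.YZ → u ∈ c u ∧ u ∉ Odds G (c u)
  P7 : ∀ u, u ∉ O → lam u = MLabel.X → u ∈ Odds G (c u)
  P8 : ∀ u, u ∉ O → lam u = MLabel.Z → u ∈ c u
  P9 : ∀ u, u ∉ O → lam u = MLabel.Y → Xor' (u ∈ c u) (u ∈ Odds G (c u))

/-- Focussing conditions (F1)-(F3). -/
def Focussed (G : SimpleGraph V) [DecidableRel G.Adj]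
    (O : Finset V) (lam : V → MLabel) (c : V → Finset V) : Prop :=
  ∀ v, v ∉ O →
    (∀ w, w ∉ O → w ≠ v → w ∈ c v →
      lam w = MLabel.XY ∨ lam w = MLabel.X ∨ lam w = MLabel.Y) ∧
    (∀ w, w ∉ O → w ≠ v → w ∈ Odds G (c v) →
      lam w = MLabel.XZ ∨ lam w = MLabel.YZ ∨ lam w = MLabel.Y ∨ lam w = MLabel.Z) ∧
    (∀ w, w ∉ O → w ≠ v → lam w = MLabel.Y → (w ∈ c v ↔ w ∈ Odds G (c v)))

/-- The reduced adjacency matrix over F₂: rows indexed by non-outputs, columns by non-inputs. -/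
def redAdj (G : SimpleGraph V) [DecidableRel G.Adj] (I O : Finset V) :
    Matrix {v : V // v ∉ O} {v : V // v ∉ I} (ZMod 2) :=
  Matrix.of fun v u => if G.Adj v.val u.val then 1 else 0

/-- The variable flow matrix, evaluated at a {0,1}-valuation `x`, `y` of the row
and column variables of internal vertices. -/
def varFlowMat (G : SimpleGraph V) [DecidableRel G.Adj] (I O : Finset V)
    (x y : V → ZMod 2) : Matrix {v : V // v ∉ O} {v : V // v ∉ I} (ZMod 2) :=
  Matrix.of fun v u =>
    if v.val = u.val then
      (if v.val ∉ I ∧ v.val ∉ O then (1 + x v.val) * (1 + y v.val) else 0)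
    else
      (if G.Adj v.val u.val then 1 else 0) *
      (if v.val ∉ I ∧ v.val ∉ O then x v.val else 1) *
      (if u.val ∉ I ∧ u.val ∉ O then y u.val else 1)

section Aux

lemma varFlowMat_rowZero (G : SimpleGraph V) [DecidableRel G.Adj] (I O : Finset V)
    (x y : V → ZMod 2) (v : {v : V // v ∉ O}) (hvI : v.val ∉ I)
    (hx : x v.val = 0) (hy : y v.val = 1) :
    ∀ u, varFlowMat G I O x y v u = 0 := by
  intro u
  have hint : v.val ∉ I ∧ v.val ∉ O := ⟨hvI, v.prop⟩
  by_cases h : v.val = u.val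
  · simp only [varFlowMat, Matrix.of_apply, if_pos h, if_pos hint, hx, hy]
    decide
  · simp only [varFlowMat, Matrix.of_apply, if_neg h, if_pos hint, hx,
      mul_zero, zero_mul]

lemma varFlowMat_noRight (G : SimpleGraph V) [DecidableRel G.Adj] (I O : Finset V)
    (x y : V → ZMod 2) (v : {v : V // v ∉ O}) (hvI : v.val ∉ I)
    (hx : x v.val = 0) (hy : y v.val = 1) :
    ¬ ∃ N : Matrix {v : V // v ∉ I} {v : V // v ∉ O} (ZMod 2),
        varFlowMat G I O x y * N = 1 := by
  rintro ⟨N, hN⟩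
  have h1 := congrFun (congrFun hN v) v
  rw [Matrix.mul_apply, Matrix.one_apply_eq] at h1
  simp only [varFlowMat_rowZero G I O x y v hvI hx hy, zero_mul,
    Finset.sum_const_zero] at h1
  exact absurd h1 (by decide)

lemma varFlowMat_factor (G : SimpleGraph V) [DecidableRel G.Adj] (I O : Finset V)
    (x y : V → ZMod 2) (v : V) (hvI : v ∉ I) (hvO : v ∉ O)
    (hx : x v = 1) (hy : y v = 0) :
    varFlowMat G I O x y =
      varFlowMat G I O x (Function.update y v 1) *
        Matrix.diagonal (fun u : {v : V // v ∉ I} => if u.val = v then (0 : ZMod 2) else 1) := by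
  ext i j
  rw [Matrix.mul_diagonal]
  by_cases hj : j.val = v
  · rw [if_pos hj, mul_zero]
    by_cases hij : i.val = j.val
    · have hiv : i.val = v := hij.trans hj
      have hint : v ∉ I ∧ v ∉ O := ⟨hvI, hvO⟩
      simp only [varFlowMat, Matrix.of_apply, if_pos hij]
      rw [hiv, if_pos hint, hx, hy]
      decide
    · have hint : v ∉ I ∧ v ∉ O := ⟨hvI, hvO⟩
      have hiv : ¬ (i.val = v) := fun h => hij (h.trans hj.symm)
      simp only [varFlowMat, Matrix.of_apply, if_neg hij, hj, if_pos hint, hy,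
        mul_zero]
      rw [if_neg hiv]
  · rw [if_neg hj, mul_one]
    have h1 : Function.update y v 1 j.val = y j.val := Function.update_of_ne hj _ _
    by_cases hij : i.val = j.val
    · have h2 : Function.update y v 1 i.val = y i.val := by rw [hij]; exact h1
      simp only [varFlowMat, Matrix.of_apply, if_pos hij, h2]
    · simp only [varFlowMat, Matrix.of_apply, if_neg hij, h1]

lemma varFlowMat_step (G : SimpleGraph V) [DecidableRel G.Adj] (I O : Finset V)
    (x y : V → ZMod 2) (v : V) (hvI : v ∉ I) (hvO : v ∉ O)
    (hx : x v = 1) (hy : y v = 0)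
    (N : Matrix {v : V // v ∉ I} {v : V // v ∉ O} (ZMod 2))
    (hN : varFlowMat G I O x y * N = 1) :
    ∃ N' : Matrix {v : V // v ∉ I} {v : V // v ∉ O} (ZMod 2),
      varFlowMat G I O x (Function.update y v 1) * N' = 1 := by
  refine ⟨Matrix.diagonal (fun u : {v : V // v ∉ I} => if u.val = v then (0 : ZMod 2) else 1) * N, ?_⟩
  rw [← Matrix.mul_assoc, ← varFlowMat_factor G I O x y v hvI hvO hx hy, hN]

end Aux

/-- (i) A valuation with `x v = 0`, `y v = 1` at an internal vertex `v` makes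
row `v` zero, so the matrix is not right-invertible; (ii) for `x v = 1`,
`y v = 0`, changing `y v` to `1` cannot decrease the rank; consequently (iii)
right-invertibility under some {0,1}-valuation implies right-invertibility
under one with `x' v = y' v` for all internal `v`. -/
theorem varFlowMat_valuations (G : SimpleGraph V) [DecidableRel G.Adj]
    (I O : Finset V) (hIO : I ∩ O = ∅) :
    (∀ (x y : V → ZMod 2) (v : {v : V // v ∉ O}),
      v.val ∉ I → x v.val = 0 → y v.val = 1 →
        (∀ u, varFlowMat G I O x y v u = 0) ∧
        ¬ ∃ N : Matrix {v : V // v ∉ I} {v : V // v ∉ O} (ZMod 2),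
            varFlowMat G I O x y * N = 1) ∧
    (∀ (x y : V → ZMod 2) (v : V),
      v ∉ I → v ∉ O → x v = 1 → y v = 0 →
        (varFlowMat G I O x y).rank ≤
          (varFlowMat G I O x (Function.update y v 1)).rank) ∧
    ((∃ x y : V → ZMod 2,
        ∃ N : Matrix {v : V // v ∉ I} {v : V // v ∉ O} (ZMod 2),
          varFlowMat G I O x y * N = 1) →
      ∃ x' y' : V → ZMod 2, (∀ v, v ∉ I → v ∉ O → x' v = y' v) ∧
        ∃ N : Matrix {v : V // v ∉ I} {v : V // v ∉ O} (ZMod 2),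
          varFlowMat G I O x' y' * N = 1) := by
  refine ⟨fun x y v hvI hx hy =>
    ⟨varFlowMat_rowZero G I O x y v hvI hx hy, varFlowMat_noRight G I O x y v hvI hx hy⟩,
    fun x y v hvI hvO hx hy => ?_, ?_⟩
  · rw [varFlowMat_factor G I O x y v hvI hvO hx hy]
    exact Matrix.rank_mul_le_left _ _
  · have h01 : ∀ a : ZMod 2, a = 0 ∨ a = 1 := by decide
    suffices h : ∀ n (x y : V → ZMod 2),
        (Finset.univ.filter fun v => v ∉ I ∧ v ∉ O ∧ x v ≠ y v).card = n →
        (∃ N : Matrix {v : V // v ∉ I} {v : V // v ∉ O} (ZMod 2),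
            varFlowMat G I O x y * N = 1) →
        ∃ x' y' : V → ZMod 2, (∀ v, v ∉ I → v ∉ O → x' v = y' v) ∧
          ∃ N : Matrix {v : V // v ∉ I} {v : V // v ∉ O} (ZMod 2),
            varFlowMat G I O x' y' * N = 1 by
      rintro ⟨x, y, N, hN⟩
      exact h _ x y rfl ⟨N, hN⟩
    intro n
    induction n using Nat.strong_induction_on with
    | _ n ih =>
      intro x y hcard hinv
      by_cases hS : (Finset.univ.filter fun v => v ∉ I ∧ v ∉ O ∧ x v ≠ y v) = ∅
      · refine ⟨x, y, fun v hvI hvO => ?_, hinv⟩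
        by_contra hne
        have hv : v ∈ (Finset.univ.filter fun v => v ∉ I ∧ v ∉ O ∧ x v ≠ y v) :=
          Finset.mem_filter.mpr ⟨Finset.mem_univ v, hvI, hvO, hne⟩
        rw [hS] at hv
        exact absurd hv (Finset.notMem_empty v)
      · obtain ⟨v, hv⟩ := Finset.nonempty_of_ne_empty hS
        obtain ⟨-, hvI, hvO, hne⟩ := Finset.mem_filter.mp hv
        rcases h01 (x v) with hx | hx
        · have hy : y v = 1 := by
            rcases h01 (y v) with hy | hy
            · exact absurd (hx.trans hy.symm) hne
            · exact hy
          exact absurd hinv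
            (varFlowMat_noRight G I O x y ⟨v, hvO⟩ hvI hx hy)
        · have hy : y v = 0 := by
            rcases h01 (y v) with hy | hy
            · exact hy
            · exact absurd (hx.trans hy.symm) hne
          obtain ⟨N, hN⟩ := hinv
          obtain ⟨N', hN'⟩ := varFlowMat_step G I O x y v hvI hvO hx hy N hN
          refine ih _ ?_ x (Function.update y v 1) rfl ⟨N', hN'⟩
          calc (Finset.univ.filter fun u =>
                  u ∉ I ∧ u ∉ O ∧ x u ≠ Function.update y v 1 u).card
              ≤ ((Finset.univ.filter fun u => u ∉ I ∧ u ∉ O ∧ x u ≠ y u).erase v).card := by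
                apply Finset.card_le_card
                intro u hu
                obtain ⟨-, huI, huO, hune⟩ := Finset.mem_filter.mp hu
                have huv : u ≠ v := by
                  intro h
                  subst h
                  rw [Function.update_self] at hune
                  exact hune hx
                rw [Function.update_of_ne huv] at hune
                exact Finset.mem_erase.mpr ⟨huv,
                  Finset.mem_filter.mpr ⟨Finset.mem_univ u, huI, huO, hune⟩⟩
            _ < (Finset.univ.filter fun u => u ∉ I ∧ u ∉ O ∧ x u ≠ y u).card :=
                Finset.card_erase_lt_of_mem hv
            _ = n := hcard
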